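/- arXiv:1710.06938 — 2 statements merged into one kernel-verified Lean document; each statement's English description precedes it below -/
import Mathlib

section
/- The metric space (Ω, d_Ω) is complete, and the topology induced by d_Ω on Ω coincides with the subspace topology that Ω inherits from the norm topology of E. -/
/-!
Write `y = x + t • (b - x)` with `b` the frontier point beyond `y`. The cross-ratio defining
`dΩ x y` is at least `‖b - x‖ / ‖b - y‖ = 1 / (1 - t)`, so `t ≤ 1 - exp (-2 dΩ x y)`. Hence
`‖x - y‖ ≤ 2 diam Ω · dΩ x y`, and the closed `dΩ`-ball of radius `R` about `x` lies in the image
of `closure Ω × [0, 1 - exp (-2R)]` under `(b, t) ↦ x + t • (b - x)`, which is compact and, by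
convexity, contained in `Ω`: `(Ω, dΩ)` is proper, hence complete. Conversely, if the `ρ`-balls
about `x` and `y` lie in `Ω`, both frontier points are at distance at least `ρ`, so
`dΩ x y ≤ log (1 + ‖x - y‖ / ρ)`. The two bounds make the topologies agree.
-/

open Set

/-- The defining property of the Hilbert distance on a convex domain `Ω`. -/
def IsHilbertDist {E : Type*} [NormedAddCommGroup E] [NormedSpace ℝ E]
    (Ω : Set E) (dΩ : E → E → ℝ) : Prop :=
  (∀ x, dΩ x x = 0) ∧
  ∀ x ∈ Ω, ∀ y ∈ Ω, x ≠ y →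
    ∃ a b : E, a ∈ frontier Ω ∧ b ∈ frontier Ω ∧
      x ∈ openSegment ℝ a y ∧ y ∈ openSegment ℝ x b ∧
      dΩ x y = (1/2) * Real.log ((‖a - y‖ * ‖b - x‖) / (‖a - x‖ * ‖b - y‖))

open Filter Topology Metric Real AffineMap

namespace IsHilbertDist

variable {E : Type*} [NormedAddCommGroup E] [NormedSpace ℝ E] {Ω : Set E} {dΩ : E → E → ℝ}
  {x y : E}

theorem exists_frontier_eq_half_log_add (hd : IsHilbertDist Ω dΩ) (hx : x ∈ Ω) (hy : y ∈ Ω)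
    (hxy : x ≠ y) :
    ∃ a ∈ frontier Ω, ∃ b ∈ frontier Ω, y ∈ openSegment ℝ x b ∧ 0 < dist a x ∧
      0 < dist b y ∧
      dΩ x y = (log (1 + dist x y / dist a x) + log (1 + dist x y / dist b y)) / 2 := by
  obtain ⟨a, b, ha, hb, hxa, hyb, hdist⟩ := hd.2 x hx y hy hxy
  have hax : 0 < dist a x := dist_pos.2 fun h => hxy (left_mem_openSegment_iff.1 (h ▸ hxa))
  have hby : 0 < dist b y := dist_pos.2 fun h => hxy (right_mem_openSegment_iff.1 (h ▸ hyb))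
  have hay : dist a y = dist a x + dist x y :=
    (dist_add_dist_of_mem_segment (openSegment_subset_segment _ _ _ hxa)).symm
  have hbx : dist b x = dist x y + dist b y := by
    rw [dist_comm b x, dist_comm b y]
    exact (dist_add_dist_of_mem_segment (openSegment_subset_segment _ _ _ hyb)).symm
  refine ⟨a, ha, b, hb, hyb, hax, hby, ?_⟩
  simp only [← dist_eq_norm] at hdist
  have hsplit : (dist a x + dist x y) * (dist x y + dist b y) / (dist a x * dist b y)
      = (1 + dist x y / dist a x) * (1 + dist x y / dist b y) := by
    field_simp
    ring
  rw [hdist, hay, hbx, hsplit, log_mul (by positivity) (by positivity)]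
  ring

theorem exists_mem_closure_lineMap_eq (hd : IsHilbertDist Ω dΩ) (hx : x ∈ Ω) (hy : y ∈ Ω) :
    ∃ b ∈ closure Ω, ∃ t : ℝ, 0 ≤ t ∧ lineMap x b t = y ∧ exp (-(2 * dΩ x y)) ≤ 1 - t := by
  rcases eq_or_ne x y with rfl | hxy
  · exact ⟨x, subset_closure hx, 0, le_rfl, lineMap_apply_zero _ _, by simp [hd.1]⟩
  obtain ⟨a, -, b, hb, hyb, hax, hby, hdist⟩ := hd.exists_frontier_eq_half_log_add hx hy hxy
  rw [openSegment_eq_image_lineMap] at hyb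
  obtain ⟨t, ⟨ht0, ht1⟩, rfl⟩ := hyb
  refine ⟨b, frontier_subset_closure hb, t, ht0.le, rfl, ?_⟩
  have hxb : dist x b ≠ 0 := by
    rw [dist_comm, dist_lineMap_right, Real.norm_of_nonneg (by linarith)] at hby
    exact (pos_of_mul_pos_right hby (by linarith)).ne'
  have hb_term : 1 + dist x (lineMap x b t) / dist b (lineMap x b t) = (1 - t)⁻¹ := by
    rw [dist_left_lineMap, dist_comm b, dist_lineMap_right, Real.norm_of_nonneg ht0.le,
      Real.norm_of_nonneg (by linarith)]
    field_simp
    ring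
  have ha_term : 0 ≤ log (1 + dist x (lineMap x b t) / dist a x) :=
    log_nonneg (le_add_of_nonneg_right (by positivity))
  have : -log (1 - t) ≤ 2 * dΩ x (lineMap x b t) := by
    rw [hdist, hb_term, log_inv]
    linarith
  calc exp (-(2 * dΩ x (lineMap x b t))) ≤ exp (log (1 - t)) := exp_le_exp.2 (by linarith)
    _ = 1 - t := exp_log (by linarith)

theorem nonneg (hd : IsHilbertDist Ω dΩ) (hx : x ∈ Ω) (hy : y ∈ Ω) : 0 ≤ dΩ x y := by
  obtain ⟨-, -, t, ht0, -, hexp⟩ := hd.exists_mem_closure_lineMap_eq hx hy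
  have : -(2 * dΩ x y) ≤ 0 := exp_le_one_iff.1 (by linarith)
  linarith

theorem dist_le_two_mul_diam_mul (hd : IsHilbertDist Ω dΩ) (hbdd : Bornology.IsBounded Ω)
    (hx : x ∈ Ω) (hy : y ∈ Ω) : dist x y ≤ 2 * diam Ω * dΩ x y := by
  obtain ⟨b, hb, t, ht0, rfl, hexp⟩ := hd.exists_mem_closure_lineMap_eq hx hy
  have hxb : dist x b ≤ diam Ω := by
    simpa only [diam_closure] using dist_le_diam_of_mem hbdd.closure (subset_closure hx) hb
  have ht : t ≤ 2 * dΩ x (lineMap x b t) := by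
    linarith [add_one_le_exp (-(2 * dΩ x (lineMap x b t)))]
  calc dist x (lineMap x b t) = t * dist x b := by
        rw [dist_left_lineMap, Real.norm_of_nonneg ht0]
    _ ≤ 2 * dΩ x (lineMap x b t) * diam Ω :=
        mul_le_mul ht hxb dist_nonneg (ht0.trans ht)
    _ = 2 * diam Ω * dΩ x (lineMap x b t) := by ring

theorem le_log_one_add_dist_div (hd : IsHilbertDist Ω dΩ) {ρ : ℝ} (hρ : 0 < ρ)
    (hx : ball x ρ ⊆ Ω) (hy : ball y ρ ⊆ Ω) : dΩ x y ≤ log (1 + dist x y / ρ) := by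
  rcases eq_or_ne x y with rfl | hxy
  · simp [hd.1]
  obtain ⟨a, ha, b, hb, -, hax, hby, hdist⟩ :=
    hd.exists_frontier_eq_half_log_add (hx (mem_ball_self hρ)) (hy (mem_ball_self hρ)) hxy
  have far {z c : E} (hz : ball z ρ ⊆ Ω) (hc : c ∈ frontier Ω) (hcz : 0 < dist c z) :
      log (1 + dist x y / dist c z) ≤ log (1 + dist x y / ρ) := by
    have hρc : ρ ≤ dist c z :=
      not_lt.1 fun h => hc.2 (interior_maximal hz isOpen_ball (mem_ball.2 h))
    gcongr
  linarith [far hx ha hax, far hy hb hby]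

theorem tendsto_nhds_zero (hd : IsHilbertDist Ω dΩ) (hop : IsOpen Ω) (hx : x ∈ Ω) :
    Tendsto (dΩ x) (𝓝 x) (𝓝 0) := by
  obtain ⟨r, hr, hxr⟩ := isOpen_iff.1 hop x hx
  have hbound : ∀ᶠ y in 𝓝 x, dΩ x y ≤ log (1 + dist x y / (r / 2)) := by
    filter_upwards [ball_mem_nhds x (half_pos hr)] with y hy
    refine hd.le_log_one_add_dist_div (half_pos hr) ((ball_subset_ball (by linarith)).trans hxr)
      ((ball_subset_ball' ?_).trans hxr)
    linarith [mem_ball.1 hy]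
  have hlim : Tendsto (fun y => log (1 + dist x y / (r / 2))) (𝓝 x) (𝓝 0) := by
    have h : Tendsto (fun y => 1 + dist x y / (r / 2)) (𝓝 x) (𝓝 1) := by
      have hdist := (tendsto_const_nhds (x := x)).dist (tendsto_id (x := 𝓝 x))
      simpa using (hdist.div_const (r / 2)).const_add 1
    simpa using h.log one_ne_zero
  exact tendsto_of_tendsto_of_tendsto_of_le_of_le' tendsto_const_nhds hlim
    (eventually_of_mem (hop.mem_nhds hx) fun y hy => hd.nonneg hx hy) hbound

theorem exists_isCompact_superset_closedBall [FiniteDimensional ℝ E] (hd : IsHilbertDist Ω dΩ)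
    (hop : IsOpen Ω) (hbdd : Bornology.IsBounded Ω) (hconv : Convex ℝ Ω) (hx : x ∈ Ω) (R : ℝ) :
    ∃ K, IsCompact K ∧ K ⊆ Ω ∧ {y ∈ Ω | dΩ x y ≤ R} ⊆ K := by
  set c := 1 - exp (-(2 * R))
  refine ⟨(fun p : E × ℝ => lineMap x p.1 p.2) '' (closure Ω ×ˢ Icc 0 c),
    (hbdd.isCompact_closure.prod isCompact_Icc).image
      (continuous_const.lineMap continuous_fst continuous_snd), ?_, ?_⟩
  · rintro _ ⟨⟨b, t⟩, ⟨hb, ht0, htc⟩, rfl⟩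
    have ht1 : t < 1 := htc.trans_lt (sub_lt_self 1 (exp_pos _))
    change lineMap x b t ∈ Ω
    rw [← hop.interior_eq, lineMap_apply_module]
    exact hconv.combo_interior_closure_mem_interior (hop.interior_eq.symm ▸ hx) hb
      (by linarith) ht0 (by ring)
  · rintro y ⟨hy, hyR⟩
    obtain ⟨b, hb, t, ht0, rfl, hexp⟩ := hd.exists_mem_closure_lineMap_eq hx hy
    have : exp (-(2 * R)) ≤ exp (-(2 * dΩ x (lineMap x b t))) := exp_le_exp.2 (by linarith)
    exact ⟨(b, t), ⟨hb, ht0, by linarith⟩, rfl⟩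

theorem toTopologicalSpace_eq (hd : IsHilbertDist Ω dΩ) (hop : IsOpen Ω)
    (hbdd : Bornology.IsBounded Ω) (m : MetricSpace Ω) (hm : ∀ p q : Ω, m.dist p q = dΩ p q) :
    m.toUniformSpace.toTopologicalSpace = instTopologicalSpaceSubtype := by
  have hm_symm (p q : Ω) : m.dist q p = dΩ p q := by rw [m.dist_comm, hm]
  refine TopologicalSpace.ext_nhds fun p => ?_
  rw [nhds_subtype]
  refine (@nhds_basis_ball _ m.toPseudoMetricSpace p).ext (nhds_basis_ball.comap _)
    (fun ε hε => ?_) (fun ε hε => ?_)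
  · obtain ⟨δ, hδ, hδε⟩ :=
      Metric.eventually_nhds_iff.1 ((hd.tendsto_nhds_zero hop p.2).eventually (gt_mem_nhds hε))
    exact ⟨δ, hδ, fun q hq => (hm_symm p q).trans_lt (hδε hq)⟩
  · refine ⟨ε / (2 * diam Ω + 1), by positivity, fun q hq => ?_⟩
    have hq : dΩ p q < ε / (2 * diam Ω + 1) := (hm_symm p q).symm.trans_lt hq
    have hdiam : 0 ≤ diam Ω := diam_nonneg
    calc dist (q : E) p = dist (p : E) q := dist_comm _ _
      _ ≤ 2 * diam Ω * dΩ p q := hd.dist_le_two_mul_diam_mul hbdd p.2 q.2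
      _ ≤ 2 * diam Ω * (ε / (2 * diam Ω + 1)) := by gcongr
      _ < ε := by
        rw [← mul_div_assoc, div_lt_iff₀ (by positivity)]
        linarith

theorem completeSpace [FiniteDimensional ℝ E] (hd : IsHilbertDist Ω dΩ) (hop : IsOpen Ω)
    (hbdd : Bornology.IsBounded Ω) (hconv : Convex ℝ Ω) (m : MetricSpace Ω)
    (hm : ∀ p q : Ω, m.dist p q = dΩ p q) :
    @CompleteSpace Ω m.toUniformSpace := by
  refine @complete_of_proper _ m.toPseudoMetricSpace
    (@ProperSpace.mk _ m.toPseudoMetricSpace fun p R => ?_)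
  obtain ⟨K, hK, hKΩ, hRK⟩ := hd.exists_isCompact_superset_closedBall hop hbdd hconv p.2 R
  have hK' : @IsCompact Ω m.toUniformSpace.toTopologicalSpace (Subtype.val ⁻¹' K) := by
    rw [hd.toTopologicalSpace_eq hop hbdd m hm, Subtype.isCompact_iff,
      Subtype.image_preimage_coe, inter_eq_right.2 hKΩ]
    exact hK
  refine @IsCompact.of_isClosed_subset _ m.toUniformSpace.toTopologicalSpace _ _ hK'
    (@isClosed_closedBall _ m.toPseudoMetricSpace p R) fun q hq => hRK ⟨q.2, ?_⟩
  rwa [← hm, m.dist_comm]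

end IsHilbertDist

theorem hilbert_metric_complete_and_topology_coincides_general
    {E : Type*} [NormedAddCommGroup E] [NormedSpace ℝ E] [FiniteDimensional ℝ E]
    (Ω : Set E) (hbdd : Bornology.IsBounded Ω)
    (hop : IsOpen Ω) (hconv : Convex ℝ Ω)
    (dΩ : E → E → ℝ) (hd : IsHilbertDist Ω dΩ)
    (m : MetricSpace ↥Ω) (hm : ∀ p q : ↥Ω, m.dist p q = dΩ (p : E) (q : E)) :
    @CompleteSpace ↥Ω m.toUniformSpace ∧
      m.toUniformSpace.toTopologicalSpace = instTopologicalSpaceSubtype :=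
  ⟨hd.completeSpace hop hbdd hconv m hm, hd.toTopologicalSpace_eq hop hbdd m hm⟩

/-- The metric space `(Ω, dΩ)` is complete, and the topology induced by `dΩ` on `Ω`
coincides with the subspace topology `Ω` inherits from the norm topology of `E`.
(Formally: any metric-space structure on the subtype `↥Ω` whose distance function is
`dΩ` is complete, and its topology is the subtype topology.) -/
theorem hilbert_metric_complete_and_topology_coincides
    {E : Type*} [NormedAddCommGroup E] [NormedSpace ℝ E] [FiniteDimensional ℝ E]
    (Ω : Set E) (hne : Ω.Nonempty) (hbdd : Bornology.IsBounded Ω)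
    (hop : IsOpen Ω) (hconv : Convex ℝ Ω)
    (dΩ : E → E → ℝ) (hd : IsHilbertDist Ω dΩ)
    (m : MetricSpace ↥Ω) (hm : ∀ p q : ↥Ω, m.dist p q = dΩ (p : E) (q : E)) :
    @CompleteSpace ↥Ω m.toUniformSpace ∧
      m.toUniformSpace.toTopologicalSpace = instTopologicalSpaceSubtype :=
  hilbert_metric_complete_and_topology_coincides_general Ω hbdd hop hconv dΩ hd m hm
end

section
/- For any x ∈ Ω and any nonzero vector v ∈ E, set s⁺ := sup{ s ≥ 0 : x + s·v ∈ Ω } (finite since Ω is bounded). Then the map s ↦ d_Ω(x, x + s·v) is a continuous, strictly increasing bijection from [0, s⁺) onto [0, ∞); in particular the Hilbert distance from x to points approaching the boundary along a ray tends to infinity. -/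
/-!
The line `x + ℝ v` meets the open convex set `Ω` in the chord `(x - σ v, x + τ v)` with
`σ, τ > 0`, and the points `a, b` in the definition of `d_Ω` are forced to be its endpoints: a ray
from an interior point meets the frontier of a convex open set only once. Hence
`d_Ω(x, x + s v) = ½ log ((σ + s) τ / (σ (τ - s)))`, an explicit function of `s` that vanishes at
`0`, is continuous and strictly increasing on `[0, τ)` and tends to `∞` as `s → τ`; the
intermediate value theorem turns this into the bijection `[0, τ) ≃ [0, ∞)`.
-/

open Set Filter

open Topology

lemma bijOn_Ico_Ici_of_tendsto_atTop {α β : Type*} [ConditionallyCompleteLinearOrder α]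
    [TopologicalSpace α] [OrderTopology α] [DenselyOrdered α] [LinearOrder β]
    [TopologicalSpace β] [OrderClosedTopology β] {f : α → β} {a b : α} (hab : a < b)
    (hf : StrictMonoOn f (Ico a b)) (hcont : ContinuousOn f (Ico a b))
    (htend : Tendsto f (𝓝[<] b) atTop) : BijOn f (Ico a b) (Ici (f a)) := by
  refine ⟨fun s hs => hf.monotoneOn (left_mem_Ico.2 hab) hs hs.1, hf.injOn, fun c hc => ?_⟩
  have : (𝓝[<] b).NeBot := nhdsLT_neBot_of_exists_lt ⟨a, hab⟩
  obtain ⟨t, hct, hat, htb⟩ :=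
    ((htend.eventually_ge_atTop c).and (Ioo_mem_nhdsLT hab)).exists
  obtain ⟨s, hs, rfl⟩ := intermediate_value_Icc hat.le
    (hcont.mono (Icc_subset_Ico_right htb)) ⟨hc, hct⟩
  exact ⟨s, ⟨hs.1, hs.2.trans_lt htb⟩, rfl⟩

lemma exists_one_lt_eq_add_smul_of_mem_openSegment {𝕜 E : Type*} [Field 𝕜] [LinearOrder 𝕜]
    [IsStrictOrderedRing 𝕜] [AddCommGroup E] [Module 𝕜 E] {x y z : E}
    (h : y ∈ openSegment 𝕜 x z) : ∃ r : 𝕜, 1 < r ∧ z = x + r • (y - x) := by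
  rw [openSegment_eq_image'] at h
  obtain ⟨θ, ⟨hθ₀, hθ₁⟩, rfl⟩ := h
  refine ⟨θ⁻¹, one_lt_inv_iff₀.2 ⟨hθ₀, hθ₁⟩, ?_⟩
  rw [add_sub_cancel_left, smul_smul, inv_mul_cancel₀ hθ₀.ne', one_smul, add_sub_cancel]

section IntervalProfile

/-- The Hilbert distance from `0` to `s` in the interval `(-σ, τ)` of `ℝ`. -/
noncomputable def intervalHilbertDist (σ τ s : ℝ) : ℝ :=
  (1 / 2) * Real.log ((σ + s) * τ / (σ * (τ - s)))

variable {σ τ : ℝ}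

lemma intervalHilbertDist_zero (hσ : 0 < σ) (hτ : 0 < τ) : intervalHilbertDist σ τ 0 = 0 := by
  simp [intervalHilbertDist, hσ.ne', hτ.ne']

lemma intervalHilbertDist_strictMonoOn (hσ : 0 < σ) :
    StrictMonoOn (intervalHilbertDist σ τ) (Ico 0 τ) := by
  rintro s₁ ⟨hs₁, -⟩ s₂ ⟨-, hs₂⟩ h
  have : 0 < τ - s₂ := sub_pos.2 hs₂
  have : 0 < τ - s₁ := by linarith
  have : 0 < τ := by linarith
  have : 0 ≤ s₂ := by linarith
  unfold intervalHilbertDist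
  gcongr

lemma intervalHilbertDist_continuousOn (hσ : 0 < σ) :
    ContinuousOn (intervalHilbertDist σ τ) (Ico 0 τ) := by
  have hgap : ∀ s ∈ Ico 0 τ, 0 < σ * (τ - s) := fun s hs => mul_pos hσ (sub_pos.2 hs.2)
  have hpos : ∀ s ∈ Ico 0 τ, 0 < (σ + s) * τ / (σ * (τ - s)) := fun s hs =>
    div_pos (mul_pos (by linarith [hs.1]) (hs.1.trans_lt hs.2)) (hgap s hs)
  refine continuousOn_const.mul (ContinuousOn.log ?_ fun s hs => (hpos s hs).ne')
  exact ContinuousOn.div (by fun_prop) (by fun_prop) fun s hs => (hgap s hs).ne'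

lemma tendsto_intervalHilbertDist_atTop (hσ : 0 < σ) (hτ : 0 < τ) :
    Tendsto (intervalHilbertDist σ τ) (𝓝[<] τ) atTop := by
  have hgap : Tendsto (fun s => σ * (τ - s)) (𝓝[<] τ) (𝓝[>] 0) := by
    refine tendsto_nhdsWithin_of_tendsto_nhds_of_eventually_within _ ?_ ?_
    · have : Tendsto (fun s => σ * (τ - s)) (𝓝 τ) (𝓝 (σ * (τ - τ))) :=
        (Continuous.tendsto (by fun_prop) τ)
      simpa using this.mono_left nhdsWithin_le_nhds
    · filter_upwards [self_mem_nhdsWithin] with s (hs : s < τ)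
      exact mul_pos hσ (sub_pos.2 hs)
  have hnum : Tendsto (fun s => (σ + s) * τ) (𝓝[<] τ) (𝓝 ((σ + τ) * τ)) :=
    (Continuous.tendsto (by fun_prop) τ).mono_left nhdsWithin_le_nhds
  have hratio := (hnum.pos_mul_atTop (by positivity) hgap.inv_tendsto_nhdsGT_zero)
  exact (Real.tendsto_log_atTop.comp hratio).const_mul_atTop one_half_pos

end IntervalProfile

section Ray

variable {E : Type*} [NormedAddCommGroup E] [NormedSpace ℝ E] {Ω : Set E} {x v : E}

/-- The parameter `s⁺` at which the ray `s ↦ x + s • v` leaves `Ω`. -/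
noncomputable def rayExit (Ω : Set E) (x v : E) : ℝ := sSup {s : ℝ | 0 ≤ s ∧ x + s • v ∈ Ω}

lemma rayExit_nonneg : 0 ≤ rayExit Ω x v := Real.sSup_nonneg fun _ hs => hs.1

lemma bddAbove_setOf_add_smul_mem (hbdd : Bornology.IsBounded Ω) (hv : v ≠ 0) :
    BddAbove {s : ℝ | 0 ≤ s ∧ x + s • v ∈ Ω} := by
  obtain ⟨C, hC⟩ := isBounded_iff_forall_norm_le.1 hbdd
  refine ⟨(C + ‖x‖) / ‖v‖, fun s ⟨hs₀, hs⟩ => (le_div_iff₀ (norm_pos_iff.2 hv)).2 ?_⟩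
  calc s * ‖v‖ = ‖(x + s • v) - x‖ := by
        rw [add_sub_cancel_left, norm_smul, Real.norm_of_nonneg hs₀]
    _ ≤ ‖x + s • v‖ + ‖x‖ := norm_sub_le _ _
    _ ≤ C + ‖x‖ := by gcongr; exact hC _ hs

lemma le_rayExit (hbdd : Bornology.IsBounded Ω) (hv : v ≠ 0) {s : ℝ} (hs₀ : 0 ≤ s)
    (hs : x + s • v ∈ Ω) : s ≤ rayExit Ω x v :=
  le_csSup (bddAbove_setOf_add_smul_mem hbdd hv) ⟨hs₀, hs⟩

lemma exists_gt_add_smul_mem (hop : IsOpen Ω) {t : ℝ} (ht : x + t • v ∈ Ω) :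
    ∃ t' > t, x + t' • v ∈ Ω := by
  have hopen : IsOpen {s : ℝ | x + s • v ∈ Ω} := hop.preimage (by fun_prop)
  obtain ⟨t', hmem, hlt⟩ :=
    ((eventually_nhdsWithin_of_eventually_nhds (hopen.mem_nhds ht)).and
      (self_mem_nhdsWithin : Ioi t ∈ 𝓝[>] t)).exists
  exact ⟨t', hlt, hmem⟩

lemma rayExit_pos (hop : IsOpen Ω) (hbdd : Bornology.IsBounded Ω) (hx : x ∈ Ω) (hv : v ≠ 0) :
    0 < rayExit Ω x v := by
  obtain ⟨t, ht₀, ht⟩ := exists_gt_add_smul_mem (t := 0) (v := v) hop (by simpa using hx)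
  exact ht₀.trans_le (le_rayExit hbdd hv ht₀.le ht)

lemma add_smul_mem_of_lt_rayExit (hconv : Convex ℝ Ω) (hx : x ∈ Ω) {s : ℝ} (hs₀ : 0 ≤ s)
    (hs : s < rayExit Ω x v) : x + s • v ∈ Ω := by
  have hzero : (0 : ℝ) ∈ {s : ℝ | 0 ≤ s ∧ x + s • v ∈ Ω} := ⟨le_rfl, by simpa using hx⟩
  obtain ⟨t, ⟨-, ht⟩, hst⟩ := exists_lt_of_lt_csSup ⟨0, hzero⟩ hs
  have ht₀ : 0 < t := hs₀.trans_lt hst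
  have hseg := hconv.add_smul_mem hx ht ⟨div_nonneg hs₀ ht₀.le, (div_le_one ht₀).2 hst.le⟩
  rwa [smul_smul, div_mul_cancel₀ s ht₀.ne'] at hseg

lemma add_rayExit_smul_notMem (hop : IsOpen Ω) (hbdd : Bornology.IsBounded Ω) (hv : v ≠ 0) :
    x + rayExit Ω x v • v ∉ Ω := fun hmem => by
  obtain ⟨t, hlt, ht⟩ := exists_gt_add_smul_mem hop hmem
  exact hlt.not_ge (le_rayExit hbdd hv (rayExit_nonneg.trans hlt.le) ht)

lemma eq_rayExit_of_add_smul_mem_frontier (hop : IsOpen Ω) (hbdd : Bornology.IsBounded Ω)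
    (hconv : Convex ℝ Ω) (hx : x ∈ Ω) (hv : v ≠ 0) {t : ℝ} (ht₀ : 0 ≤ t)
    (ht : x + t • v ∈ frontier Ω) : t = rayExit Ω x v := by
  rw [hop.frontier_eq] at ht
  obtain hlt | heq | hgt := lt_trichotomy t (rayExit Ω x v)
  · exact absurd (add_smul_mem_of_lt_rayExit hconv hx ht₀ hlt) ht.2
  · exact heq
  · have htpos : 0 < t := rayExit_nonneg.trans_lt hgt
    set θ := rayExit Ω x v / t
    have hcombo := hconv.combo_interior_closure_mem_interior (hop.interior_eq.symm ▸ hx) ht.1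
      (sub_pos.2 ((div_lt_one htpos).2 hgt)) (div_nonneg rayExit_nonneg htpos.le)
      (sub_add_cancel 1 θ)
    have hpoint : (1 - θ) • x + θ • (x + t • v) = x + rayExit Ω x v • v := by
      simp only [θ]; match_scalars <;> field_simp; ring
    rw [hpoint, hop.interior_eq] at hcombo
    exact absurd hcombo (add_rayExit_smul_notMem hop hbdd hv)

lemma norm_add_smul_sub_add_smul (x v : E) (p q : ℝ) :
    ‖(x + p • v) - (x + q • v)‖ = |p - q| * ‖v‖ := by
  rw [add_sub_add_left_eq_sub, ← sub_smul, norm_smul, Real.norm_eq_abs]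

end Ray

namespace IsHilbertDist

variable {E : Type*} [NormedAddCommGroup E] [NormedSpace ℝ E] {Ω : Set E} {dΩ : E → E → ℝ}
  {x v : E}

lemma apply_add_smul (hd : IsHilbertDist Ω dΩ) (hop : IsOpen Ω) (hbdd : Bornology.IsBounded Ω)
    (hconv : Convex ℝ Ω) (hx : x ∈ Ω) (hv : v ≠ 0) {s : ℝ} (hs₀ : 0 < s)
    (hs : s < rayExit Ω x v) :
    dΩ x (x + s • v) = intervalHilbertDist (rayExit Ω x (-v)) (rayExit Ω x v) s := by
  set σ := rayExit Ω x (-v)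
  set τ := rayExit Ω x v
  have hσ : 0 < σ := rayExit_pos hop hbdd hx (neg_ne_zero.2 hv)
  have hxy : x ≠ x + s • v := by simp [hs₀.ne', hv]
  obtain ⟨a, b, ha_front, hb_front, hxa, hyb, hdist⟩ :=
    hd.2 x hx _ (add_smul_mem_of_lt_rayExit hconv hx hs₀.le hs) hxy
  obtain ⟨r, hr, rfl⟩ := exists_one_lt_eq_add_smul_of_mem_openSegment hyb
  obtain ⟨r', hr', rfl⟩ :=
    exists_one_lt_eq_add_smul_of_mem_openSegment (openSegment_symm ℝ a _ ▸ hxa)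
  have hb : x + r • (x + s • v - x) = x + τ • v := by
    rw [add_sub_cancel_left, smul_smul] at hb_front ⊢
    rw [eq_rayExit_of_add_smul_mem_frontier hop hbdd hconv hx hv (by positivity) hb_front]
  have ha : x + s • v + r' • (x - (x + s • v)) = x + (-σ) • v := by
    have hrepr : x + s • v + r' • (x - (x + s • v)) = x + ((r' - 1) * s) • (-v) := by module
    rw [hrepr] at ha_front ⊢
    rw [eq_rayExit_of_add_smul_mem_frontier hop hbdd hconv hx (neg_ne_zero.2 hv)
      (mul_nonneg (by linarith) hs₀.le) ha_front, neg_smul, smul_neg]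
  have hτs : 0 < τ - s := sub_pos.2 hs
  have hnv : 0 < ‖v‖ := norm_pos_iff.2 hv
  have hay : ‖x + (-σ) • v - (x + s • v)‖ = (σ + s) * ‖v‖ := by
    rw [norm_add_smul_sub_add_smul, abs_of_neg (by linarith)]
    ring
  have hbx : ‖x + τ • v - x‖ = τ * ‖v‖ := by
    rw [add_sub_cancel_left, norm_smul, Real.norm_of_nonneg rayExit_nonneg]
  have hax : ‖x + (-σ) • v - x‖ = σ * ‖v‖ := by
    rw [add_sub_cancel_left, norm_smul, norm_neg, Real.norm_of_nonneg hσ.le]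
  have hby : ‖x + τ • v - (x + s • v)‖ = (τ - s) * ‖v‖ := by
    rw [norm_add_smul_sub_add_smul, abs_of_pos hτs]
  rw [hdist, ha, hb, hay, hbx, hax, hby, intervalHilbertDist]
  congr 2
  field_simp

lemma eqOn_intervalHilbertDist (hd : IsHilbertDist Ω dΩ) (hop : IsOpen Ω)
    (hbdd : Bornology.IsBounded Ω) (hconv : Convex ℝ Ω) (hx : x ∈ Ω) (hv : v ≠ 0) :
    EqOn (fun s : ℝ => dΩ x (x + s • v))
      (intervalHilbertDist (rayExit Ω x (-v)) (rayExit Ω x v)) (Ico 0 (rayExit Ω x v)) := by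
  rintro s ⟨hs₀, hs⟩
  obtain rfl | hs₀ := hs₀.eq_or_lt
  · rw [intervalHilbertDist_zero (rayExit_pos hop hbdd hx (neg_ne_zero.2 hv))
      (rayExit_pos hop hbdd hx hv)]
    simp only [zero_smul, add_zero, hd.1]
  · exact hd.apply_add_smul hop hbdd hconv hx hv hs₀ hs

end IsHilbertDist

theorem hilbert_dist_along_ray_general
    {E : Type*} [NormedAddCommGroup E] [NormedSpace ℝ E]
    (Ω : Set E) (hbdd : Bornology.IsBounded Ω)
    (hop : IsOpen Ω) (hconv : Convex ℝ Ω)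
    (dΩ : E → E → ℝ) (hd : IsHilbertDist Ω dΩ)
    {x : E} (hx : x ∈ Ω) {v : E} (hv : v ≠ 0) :
    StrictMonoOn (fun s : ℝ => dΩ x (x + s • v))
        (Set.Ico 0 (sSup {s : ℝ | 0 ≤ s ∧ x + s • v ∈ Ω})) ∧
      ContinuousOn (fun s : ℝ => dΩ x (x + s • v))
        (Set.Ico 0 (sSup {s : ℝ | 0 ≤ s ∧ x + s • v ∈ Ω})) ∧
      Set.BijOn (fun s : ℝ => dΩ x (x + s • v))
        (Set.Ico 0 (sSup {s : ℝ | 0 ≤ s ∧ x + s • v ∈ Ω})) (Set.Ici 0) ∧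
      Filter.Tendsto (fun s : ℝ => dΩ x (x + s • v))
        (nhdsWithin (sSup {s : ℝ | 0 ≤ s ∧ x + s • v ∈ Ω})
          (Set.Iio (sSup {s : ℝ | 0 ≤ s ∧ x + s • v ∈ Ω}))) Filter.atTop := by
  have hτ : 0 < rayExit Ω x v := rayExit_pos hop hbdd hx hv
  have hσ : 0 < rayExit Ω x (-v) := rayExit_pos hop hbdd hx (neg_ne_zero.2 hv)
  have heq := hd.eqOn_intervalHilbertDist hop hbdd hconv hx hv
  have hmono := (intervalHilbertDist_strictMonoOn hσ).congr heq.symm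
  have hcont := (intervalHilbertDist_continuousOn hσ).congr heq
  have htend : Tendsto (fun s : ℝ => dΩ x (x + s • v)) (𝓝[<] rayExit Ω x v) atTop :=
    (tendsto_intervalHilbertDist_atTop hσ hτ).congr' <|
      eventuallyEq_of_mem (Ioo_mem_nhdsLT hτ) fun s hs => (heq (Ioo_subset_Ico_self hs)).symm
  have hbij := bijOn_Ico_Ici_of_tendsto_atTop hτ hmono hcont htend
  simp only [zero_smul, add_zero, hd.1] at hbij
  exact ⟨hmono, hcont, hbij, htend⟩

/-- For `x ∈ Ω` and `v ≠ 0`, with `s⁺ := sup { s ≥ 0 : x + s·v ∈ Ω }`, the map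
`s ↦ dΩ(x, x + s·v)` is a continuous strictly increasing bijection from `[0, s⁺)`
onto `[0, ∞)`; in particular the Hilbert distance from `x` to points approaching the
boundary along the ray tends to infinity. -/
theorem hilbert_dist_along_ray
    {E : Type*} [NormedAddCommGroup E] [NormedSpace ℝ E] [FiniteDimensional ℝ E]
    (Ω : Set E) (hne : Ω.Nonempty) (hbdd : Bornology.IsBounded Ω)
    (hop : IsOpen Ω) (hconv : Convex ℝ Ω)
    (dΩ : E → E → ℝ) (hd : IsHilbertDist Ω dΩ)
    {x : E} (hx : x ∈ Ω) {v : E} (hv : v ≠ 0) :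
    StrictMonoOn (fun s : ℝ => dΩ x (x + s • v))
        (Set.Ico 0 (sSup {s : ℝ | 0 ≤ s ∧ x + s • v ∈ Ω})) ∧
      ContinuousOn (fun s : ℝ => dΩ x (x + s • v))
        (Set.Ico 0 (sSup {s : ℝ | 0 ≤ s ∧ x + s • v ∈ Ω})) ∧
      Set.BijOn (fun s : ℝ => dΩ x (x + s • v))
        (Set.Ico 0 (sSup {s : ℝ | 0 ≤ s ∧ x + s • v ∈ Ω})) (Set.Ici 0) ∧
      Filter.Tendsto (fun s : ℝ => dΩ x (x + s • v))
        (nhdsWithin (sSup {s : ℝ | 0 ≤ s ∧ x + s • v ∈ Ω})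
          (Set.Iio (sSup {s : ℝ | 0 ≤ s ∧ x + s • v ∈ Ω}))) Filter.atTop :=
  hilbert_dist_along_ray_general Ω hbdd hop hconv dΩ hd hx hv
end
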